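/- arXiv:2207.08757 — 9 statements merged into one kernel-verified Lean document; each statement's English description precedes it below -/
import Mathlib

section
/- Assume the falsifiability assumption. Let δ be an instantiated denial constraint and c a cell such that some predicate of δ contains a cell different from c (in particular this holds whenever Preds(δ∖c) is nonempty). Then the inferred value set of c from the base view is the entire domain: I(c ∣ ν₀, δ) = Dom(c). -/
open scoped Classical

section TattleTale

variable {C : Type} {V : Type}

/-- A predicate of an instantiated denial constraint: a nonempty finite set of
cells together with a property of database states whose truth value only
depends on the values of those cells. -/
structure DCPred (C V : Type) where
  cells : Finset C
  cells_nonempty : cells.Nonempty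
  eval : (C → V) → Prop
  local_eval : ∀ b b' : C → V, (∀ c ∈ cells, b c = b' c) → (eval b ↔ eval b')

/-- An instantiated denial constraint: a nonempty finite family of predicates. -/
structure DC (C V : Type) where
  preds : List (DCPred C V)
  preds_nonempty : preds ≠ []

/-- A denial constraint holds on a state `b` iff not every predicate holds on `b`. -/
def DC.holds (δ : DC C V) (b : C → V) : Prop :=
  ¬ ∀ P ∈ δ.preds, P.eval b

/-- `Preds(δ∖c)`: the predicates of `δ` whose cell set does not contain `c`. -/
def DC.predsMinus (δ : DC C V) (c : C) : Set (DCPred C V) :=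
  {P | P ∈ δ.preds ∧ c ∉ P.cells}

/-- `cells(δ)`: the union of the cell sets of all predicates of `δ`. -/
def DC.cellsOf (δ : DC C V) : Set C :=
  {x | ∃ P ∈ δ.preds, x ∈ P.cells}

/-- The cueset of a cell `c` for a denial constraint `δ`. -/
noncomputable def DC.cueset (δ : DC C V) (c : C) : Set C :=
  if (δ.predsMinus c).Nonempty then
    {x | ∃ P ∈ δ.predsMinus c, x ∈ P.cells}
  else
    δ.cellsOf \ {c}

/-- A database instance: the value of each cell lies in the domain of the cell. -/
def IsInstance (Dom : C → Set V) (a : C → V) : Prop :=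
  ∀ c, a c ∈ Dom c

/-- The view of the instance `a` hiding the set `H` of cells. -/
noncomputable def view (a : C → V) (H : Set C) : C → Option V :=
  fun c => if c ∈ H then none else some (a c)

/-- The base view: every cell is hidden. -/
def baseView : C → Option V := fun _ => none

/-- A completion of a view: a domain-valued state agreeing with all revealed cells. -/
def IsCompletion (Dom : C → Set V) (ν : C → Option V) (b : C → V) : Prop :=
  (∀ c, b c ∈ Dom c) ∧ ∀ c v, ν c = some v → b c = v

/-- The inferred value set `I(c ∣ ν, δ)`. -/
def inferred (Dom : C → Set V) (ν : C → Option V) (δ : DC C V) (c : C) : Set V :=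
  {x | x ∈ Dom c ∧ ∃ b : C → V, IsCompletion Dom ν b ∧ b c = x ∧ δ.holds b}

/-- The inferred value set `I(c ∣ ν, S_Δ)` for a finite set of denial constraints,
given as a finite index set `S` and a family `Δ` of constraints. -/
def inferredSet {ι : Type} (Dom : C → Set V) (ν : C → Option V)
    (S : Finset ι) (Δ : ι → DC C V) (c : C) : Set V :=
  ⋂ i ∈ S, inferred Dom ν (Δ i) c

/-- A predicate evaluates to True in a view of instance `a`: all its cells are
revealed and it holds on `a`. -/
def evalTrue (P : DCPred C V) (ν : C → Option V) (a : C → V) : Prop :=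
  (∀ c ∈ P.cells, ν c ≠ none) ∧ P.eval a

/-- A predicate evaluates to False in a view of instance `a`: all its cells are
revealed and it fails on `a`. -/
def evalFalse (P : DCPred C V) (ν : C → Option V) (a : C → V) : Prop :=
  (∀ c ∈ P.cells, ν c ≠ none) ∧ ¬ P.eval a

/-- The Tattle-Tale Condition `TTC(δ, ν, c)` (for the view `ν` of instance `a`):
every predicate in `Preds(δ∖c)` evaluates to True in `ν`. -/
def TTC (δ : DC C V) (ν : C → Option V) (a : C → V) (c : C) : Prop :=
  ∀ P ∈ δ.predsMinus c, evalTrue P ν a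

/-- Falsifiability assumption for a single predicate: at every cell of the
predicate, any domain-valued state can be modified at that cell (within its
domain) so as to falsify the predicate. -/
def Falsifiable (Dom : C → Set V) (P : DCPred C V) : Prop :=
  ∀ c ∈ P.cells, ∀ b : C → V, (∀ c', b c' ∈ Dom c') →
    ∃ x ∈ Dom c, ¬ P.eval (Function.update b c x)

end TattleTale

/-- under the falsifiability assumption, if some predicate of `δ`
contains a cell different from `c`, then the set inferred for `c` from the base
view is the entire domain of `c`. -/
theorem stmt1 {C V : Type} [Fintype C] (Dom : C → Set V)
    (hDom : ∀ c, (Dom c).Nonempty)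
    (δ : DC C V) (hfals : ∀ P ∈ δ.preds, Falsifiable Dom P)
    (c : C) (hc : ∃ P ∈ δ.preds, ∃ c' ∈ P.cells, c' ≠ c) :
    inferred Dom (baseView (V := V)) δ c = Dom c := by
  apply Set.Subset.antisymm
  · intro x hx; exact hx.1
  · intro x hx
    obtain ⟨P, hP, c', hc', hne⟩ := hc
    -- base state: choice in each domain, with c set to x
    classical
    let b0 : C → V := Function.update (fun d => (hDom d).choose) c x
    have hb0 : ∀ d, b0 d ∈ Dom d := by
      intro d
      by_cases h : d = c
      · subst h; simpa [b0] using hx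
      · simpa [b0, Function.update_of_ne h] using (hDom d).choose_spec
    obtain ⟨y, hy, hPf⟩ := hfals P hP c' hc' b0 hb0
    refine ⟨hx, Function.update b0 c' y, ⟨?_, ?_⟩, ?_, ?_⟩
    · intro d
      by_cases h : d = c'
      · subst h; simpa using hy
      · simpa [Function.update_of_ne h] using hb0 d
    · intro d v hv; simp [baseView] at hv
    · rw [Function.update_of_ne (Ne.symm hne) y b0]
      simp [b0]
    · intro hall
      exact hPf (hall P hP)
end

section
/- (Case 1 of the Tattle-Tale theorem.) Let ν be the view of a database instance a hiding a set H ⊆ C, let δ be an instantiated denial constraint, and let c ∈ H be a hidden cell. If there exists a predicate P ∈ Preds(δ∖c) that evaluates to False in ν, i.e., every cell of cells(P) is revealed in ν and P fails on a, then the inferred value set of c is the entire domain: I(c ∣ ν, δ) = Dom(c). -/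
open scoped Classical

/-- Case 1 of the Tattle-Tale theorem: if some predicate of
`Preds(δ∖c)` evaluates to False in the view, then the set inferred for the
hidden cell `c` is the entire domain of `c`. -/
theorem stmt2 {C V : Type} [Fintype C] (Dom : C → Set V)
    (hDom : ∀ c, (Dom c).Nonempty)
    (a : C → V) (ha : IsInstance Dom a) (H : Set C)
    (δ : DC C V) (c : C) (hcH : c ∈ H)
    (hP : ∃ P ∈ δ.predsMinus c, evalFalse P (view a H) a) :
    inferred Dom (view a H) δ c = Dom c := by
  obtain ⟨P, ⟨hPmem, hPc⟩, hPrev, hPfail⟩ := hP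
  ext x
  constructor
  · rintro ⟨hx, -⟩; exact hx
  · intro hx
    refine ⟨hx, Function.update a c x, ⟨?_, ?_⟩, ?_, ?_⟩
    · intro c'
      by_cases h : c' = c
      · subst h; simpa using hx
      · simpa [Function.update_of_ne h] using ha c'
    · intro c' v hv
      unfold view at hv
      by_cases h : c' ∈ H
      · simp [h] at hv
      · simp [h] at hv
        have hne : c' ≠ c := fun e => h (e ▸ hcH)
        rw [Function.update_of_ne hne, hv]
    · simp
    · intro hall
      have := hall P hPmem
      have heq : P.eval (Function.update a c x) ↔ P.eval a := by
        apply P.local_eval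
        intro c' hc'
        exact Function.update_of_ne (fun e => hPc (by rwa [e] at hc')) _ _
      exact hPfail (heq.mp this)
end

section
/- (Case 2 of the Tattle-Tale theorem.) Assume the falsifiability assumption. Let ν be the view of a database instance a hiding a set H ⊆ C, let δ be an instantiated denial constraint, and let c ∈ H be a hidden cell. If there exists a predicate P ∈ Preds(δ∖c) at least one of whose cells is hidden in ν (so P evaluates to Unknown), then the inferred value set of c is the entire domain: I(c ∣ ν, δ) = Dom(c). -/
open scoped Classical

/-- Case 2 of the Tattle-Tale theorem: under falsifiability, if
some predicate of `Preds(δ∖c)` has a hidden cell (so it evaluates to Unknown),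
then the set inferred for the hidden cell `c` is the entire domain of `c`. -/
theorem stmt3 {C V : Type} [Fintype C] (Dom : C → Set V)
    (hDom : ∀ c, (Dom c).Nonempty)
    (a : C → V) (ha : IsInstance Dom a) (H : Set C)
    (δ : DC C V) (hfals : ∀ P ∈ δ.preds, Falsifiable Dom P)
    (c : C) (hcH : c ∈ H)
    (hP : ∃ P ∈ δ.predsMinus c, ∃ c' ∈ P.cells, c' ∈ H) :
    inferred Dom (view a H) δ c = Dom c := by
  ext x
  simp only [inferred, Set.mem_setOf_eq]
  constructor
  · rintro ⟨hx, -⟩; exact hx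
  · intro hx
    refine ⟨hx, ?_⟩
    obtain ⟨P, hPmem, c', hc'P, hc'H⟩ := hP
    have hcne : c' ≠ c := fun h => hPmem.2 (h ▸ hc'P)
    set b1 : C → V := Function.update a c x with hb1
    have hb1dom : ∀ d, b1 d ∈ Dom d := by
      intro d
      by_cases hd : d = c
      · subst hd; simpa [hb1] using hx
      · simpa [hb1, Function.update_of_ne hd] using ha d
    obtain ⟨y, hy, hfail⟩ := hfals P hPmem.1 c' hc'P b1 hb1dom
    refine ⟨Function.update b1 c' y, ⟨?_, ?_⟩, ?_, ?_⟩
    · intro d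
      by_cases hd : d = c'
      · subst hd; simpa using hy
      · rw [Function.update_of_ne hd]; exact hb1dom d
    · intro d v hv
      simp only [view] at hv
      by_cases hdH : d ∈ H
      · simp [hdH] at hv
      · simp [hdH] at hv
        have hdc : d ≠ c := fun h => hdH (h ▸ hcH)
        have hdc' : d ≠ c' := fun h => hdH (h ▸ hc'H)
        rw [Function.update_of_ne hdc', hb1, Function.update_of_ne hdc, hv]
    · rw [Function.update_of_ne (Ne.symm hcne), hb1, Function.update_self]
    · intro hall
      exact hfail (hall P hPmem.1)
end

section
/- (Theorem 4.4.) Assume the falsifiability assumption. Let ν be the view of a database instance a hiding a set H ⊆ C, let δ be an instantiated denial constraint, and let c* ∈ H ∩ cells(δ) be a hidden cell of δ. If the Tattle-Tale Condition TTC(δ, ν, c*) is False — i.e., Preds(δ∖c*) is nonempty and some predicate in Preds(δ∖c*) does not evaluate to True in ν — then the set of values inferred for c* from ν equals that inferred from the base view: I(c* ∣ ν, δ) = I(c* ∣ ν₀, δ). -/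
open scoped Classical

/-- Theorem 4.4: under falsifiability, if the Tattle-Tale
Condition for a hidden cell `c*` of `δ` is False (`Preds(δ∖c*)` is nonempty and
one of its predicates does not evaluate to True in the view), then the set of
values inferred for `c*` from the view equals that inferred from the base view. -/
theorem stmt4 {C V : Type} [Fintype C] (Dom : C → Set V)
    (hDom : ∀ c, (Dom c).Nonempty)
    (a : C → V) (ha : IsInstance Dom a) (H : Set C)
    (δ : DC C V) (hfals : ∀ P ∈ δ.preds, Falsifiable Dom P)
    (cs : C) (hcH : cs ∈ H) (hccells : cs ∈ δ.cellsOf)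
    (hTTC : (δ.predsMinus cs).Nonempty ∧
      ∃ P ∈ δ.predsMinus cs, ¬ evalTrue P (view a H) a) :
    inferred Dom (view a H) δ cs = inferred Dom baseView δ cs := by
  obtain ⟨hne, P, hP, hnotT⟩ := hTTC
  ext x
  simp only [inferred, Set.mem_setOf_eq]
  constructor
  · rintro ⟨hx, b, ⟨hb1, hb2⟩, hbc, hbh⟩
    exact ⟨hx, b, ⟨hb1, fun c v h => by simp [baseView] at h⟩, hbc, hbh⟩
  · rintro ⟨hx, -⟩
    refine ⟨hx, ?_⟩
    obtain ⟨hPmem, hPcs⟩ := hP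
    by_cases hall : ∀ c ∈ P.cells, (view a H) c ≠ none
    · have hnotP : ¬ P.eval a := fun h => hnotT ⟨hall, h⟩
      refine ⟨fun c => if c = cs then x else a c, ⟨?_, ?_⟩, by simp, ?_⟩
      · intro c; by_cases h : c = cs <;> simp [h, hx, ha c]
      · intro c v hv
        simp only [view] at hv
        by_cases h : c ∈ H
        · simp [h] at hv
        · simp only [h, if_false] at hv
          have : c ≠ cs := fun hc => h (hc ▸ hcH)
          simpa [this] using hv
      · intro hforall
        exact hnotP ((P.local_eval _ a (fun c hc => by
          have : c ≠ cs := fun h => hPcs (h ▸ hc)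
          simp [this])).mp (hforall P hPmem))
    · push_neg at hall
      obtain ⟨c0, hc0P, hc0⟩ := hall
      have hc0H : c0 ∈ H := by
        by_contra h; simp [view, h] at hc0
      have hc0cs : c0 ≠ cs := fun h => hPcs (h ▸ hc0P)
      set b0 : C → V := fun c => if c = cs then x else a c with hb0
      have hb0dom : ∀ c, b0 c ∈ Dom c := by
        intro c; by_cases h : c = cs <;> simp [hb0, h, hx, ha c]
      obtain ⟨y, hy, hPy⟩ := hfals P hPmem c0 hc0P b0 hb0dom
      refine ⟨Function.update b0 c0 y, ⟨?_, ?_⟩, ?_, ?_⟩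
      · intro c; by_cases h : c = c0
        · subst h; simpa using hy
        · simpa [Function.update, h] using hb0dom c
      · intro c v hv
        simp only [view] at hv
        by_cases h : c ∈ H
        · simp [h] at hv
        · simp only [h, if_false] at hv
          have h1 : c ≠ cs := fun hc => h (hc ▸ hcH)
          have h2 : c ≠ c0 := fun hc => h (hc ▸ hc0H)
          simp only [Function.update, dif_neg h2]
          simpa [hb0, h1] using hv
      · simp [Function.update, hc0cs.symm, hb0]
      · intro hforall
        exact hPy (hforall P hPmem)
end

section
/- (Corollary 4.5.) Assume the falsifiability assumption. Let S_Δ be a finite set of instantiated denial constraints, let a be a database instance satisfying every δ ∈ S_Δ, let ν be the view of a hiding a set H ⊆ C, and let c* ∈ H be a hidden cell. If for every δ ∈ S_Δ the Tattle-Tale Condition TTC(δ, ν, c*) is False, then the joint set of inferred values for c* from ν equals that from the base view: I(c* ∣ ν, S_Δ) = I(c* ∣ ν₀, S_Δ). -/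
open scoped Classical

lemma inferred_subset_dom {C V : Type} (Dom : C → Set V) (ν : C → Option V)
    (δ : DC C V) (c : C) : inferred Dom ν δ c ⊆ Dom c :=
  fun _ hx => hx.1

lemma key_lemma {C V : Type} (Dom : C → Set V) (δ : DC C V)
    (hfals : ∀ P ∈ δ.preds, Falsifiable Dom P)
    (a : C → V) (ha : IsInstance Dom a)
    (H : Set C) (cs : C) (hcH : cs ∈ H)
    (hT : ¬ TTC δ (view a H) a cs) :
    ∀ x ∈ Dom cs, x ∈ inferred Dom (view a H) δ cs := by
  intro x hx
  rw [TTC] at hT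
  push_neg at hT
  obtain ⟨P, hPmem, hPne⟩ := hT
  obtain ⟨hPpred, hcs⟩ := hPmem
  by_cases heval : P.eval a
  · -- some cell of P is hidden
    have : ∃ c' ∈ P.cells, view a H c' = none := by
      by_contra h
      push_neg at h
      exact hPne ⟨fun c hc => h c hc, heval⟩
    obtain ⟨c', hc'P, hc'none⟩ := this
    have hc'H : c' ∈ H := by
      by_contra hc'
      simp [view, hc'] at hc'none
    set b0 := Function.update a cs x with hb0
    have hb0dom : ∀ c, b0 c ∈ Dom c := by
      intro c
      by_cases h : c = cs
      · subst h; simp [hb0, Function.update_self, hx]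
      · simp [hb0, Function.update_of_ne h]; exact ha c
    obtain ⟨y, hy, hyfal⟩ := hfals P hPpred c' hc'P b0 hb0dom
    refine ⟨hx, Function.update b0 c' y, ⟨?_, ?_⟩, ?_, ?_⟩
    · intro c
      by_cases h : c = c'
      · subst h; simpa using hy
      · simp [Function.update_of_ne h]; exact hb0dom c
    · intro c v hv
      have hcnH : c ∉ H := by
        intro hc; simp [view, hc] at hv
      have : v = a c := by
        simp [view, hcnH] at hv; exact hv.symm
      subst this
      have h1 : c ≠ c' := fun h => hcnH (h ▸ hc'H)
      have h2 : c ≠ cs := fun h => hcnH (h ▸ hcH)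
      simp [Function.update_of_ne h1, hb0, Function.update_of_ne h2]
    · have hne : cs ≠ c' := fun h => hcs (h ▸ hc'P)
      rw [Function.update_of_ne hne, hb0, Function.update_self]
    · intro hall
      exact hyfal (hall P hPpred)
  · -- P fails on a; update only at cs
    refine ⟨hx, Function.update a cs x, ⟨?_, ?_⟩, ?_, ?_⟩
    · intro c
      by_cases h : c = cs
      · subst h; simp [Function.update_self, hx]
      · simp [Function.update_of_ne h]; exact ha c
    · intro c v hv
      have hcnH : c ∉ H := by
        intro hc; simp [view, hc] at hv
      have : v = a c := by
        simp [view, hcnH] at hv; exact hv.symm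
      subst this
      have h2 : c ≠ cs := fun h => hcnH (h ▸ hcH)
      simp [Function.update_of_ne h2]
    · simp [Function.update_self]
    · intro hall
      apply heval
      have := hall P hPpred
      rwa [P.local_eval _ a (fun c hc => Function.update_of_ne (fun h : c = cs => hcs (h ▸ hc)) _ _)] at this

/-- Corollary 4.5: under falsifiability, for an instance
satisfying every constraint in a finite set `S_Δ`, if the Tattle-Tale Condition
is False for the hidden cell `c*` and every `δ ∈ S_Δ`, then the joint inferred
value set for `c*` from the view equals that from the base view. -/
theorem stmt5 {C V ι : Type} [Fintype C] (Dom : C → Set V)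
    (hDom : ∀ c, (Dom c).Nonempty)
    (S : Finset ι) (Δ : ι → DC C V)
    (hfals : ∀ i ∈ S, ∀ P ∈ (Δ i).preds, Falsifiable Dom P)
    (a : C → V) (ha : IsInstance Dom a)
    (hsat : ∀ i ∈ S, (Δ i).holds a)
    (H : Set C) (cs : C) (hcH : cs ∈ H)
    (hTTC : ∀ i ∈ S, ¬ TTC (Δ i) (view a H) a cs) :
    inferredSet Dom (view a H) S Δ cs = inferredSet Dom baseView S Δ cs := by
  have hsub : ∀ ν : C → Option V, ∀ i ∈ S,
      inferred Dom (view a H) (Δ i) cs = inferred Dom ν (Δ i) cs → True := fun _ _ _ _ => trivial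
  have hall : ∀ i ∈ S, inferred Dom (view a H) (Δ i) cs = Dom cs := by
    intro i hi
    apply Set.Subset.antisymm (inferred_subset_dom _ _ _ _)
    intro x hx
    exact key_lemma Dom (Δ i) (hfals i hi) a ha H cs hcH (hTTC i hi) x hx
  have hbase : ∀ i ∈ S, inferred Dom baseView (Δ i) cs = Dom cs := by
    intro i hi
    apply Set.Subset.antisymm (inferred_subset_dom _ _ _ _)
    intro x hx
    obtain ⟨hx', b, hb, hbc, hbh⟩ := key_lemma Dom (Δ i) (hfals i hi) a ha H cs hcH (hTTC i hi) x hx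
    exact ⟨hx', b, ⟨hb.1, fun c v hv => by simp [baseView] at hv⟩, hbc, hbh⟩
  unfold inferredSet
  apply Set.iInter₂_congr
  intro i hi
  rw [hall i hi, hbase i hi]
end

section
/- (Theorem 4.7, Full Deniability for a Querier View.) Assume the falsifiability assumption. Let S_Δ be a finite set of instantiated denial constraints, let a be a database instance satisfying every δ ∈ S_Δ, let C^S ⊆ H ⊆ C be sets of sensitive and hidden cells respectively, and let ν be the view of a hiding H. Suppose that for every c ∈ H and every δ ∈ S_Δ, if cueset(c, δ) is nonempty then there exists a cell c' ∈ H with c' ∈ cueset(c, δ). Then ν achieves full deniability: for every c* ∈ C^S, I(c* ∣ ν, S_Δ) = I(c* ∣ ν₀, S_Δ). -/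
open scoped Classical

/-- Theorem 4.7, Full Deniability for a Querier View: under
falsifiability, if the instance satisfies every constraint in `S_Δ` and every
nonempty cueset of every hidden cell contains a hidden cell, then the view
hiding `H` achieves full deniability for the sensitive cells `C^S ⊆ H`. -/
theorem stmt7 {C V ι : Type} [Fintype C] (Dom : C → Set V)
    (hDom : ∀ c, (Dom c).Nonempty)
    (S : Finset ι) (Δ : ι → DC C V)
    (hfals : ∀ i ∈ S, ∀ P ∈ (Δ i).preds, Falsifiable Dom P)
    (a : C → V) (ha : IsInstance Dom a)
    (hsat : ∀ i ∈ S, (Δ i).holds a)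
    (CS H : Set C) (hCS : CS ⊆ H)
    (hcover : ∀ c ∈ H, ∀ i ∈ S, ((Δ i).cueset c).Nonempty →
      ∃ c' ∈ H, c' ∈ (Δ i).cueset c) :
    ∀ cstar ∈ CS,
      inferredSet Dom (view a H) S Δ cstar = inferredSet Dom baseView S Δ cstar := by
  intro cstar hcstar
  apply Set.Subset.antisymm
  · intro x hx
    simp only [inferredSet, Set.mem_iInter] at hx ⊢
    intro i hi
    obtain ⟨hxd, b, hb, hbc, hd⟩ := hx i hi
    exact ⟨hxd, b, ⟨hb.1, fun c v hv => by simp [baseView] at hv⟩, hbc, hd⟩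
  · intro x hx
    simp only [inferredSet, Set.mem_iInter] at hx ⊢
    intro i hi
    obtain ⟨hxd, b', hb', hb'c, hd'⟩ := hx i hi
    have hcH : cstar ∈ H := hCS hcstar
    refine ⟨hxd, ?_⟩
    set b0 : C → V := Function.update a cstar x with hb0
    have hb0dom : ∀ c, b0 c ∈ Dom c := by
      intro c
      by_cases h : c = cstar
      · subst h; simpa [b0] using hxd
      · simpa [b0, Function.update_of_ne h] using ha c
    have hb0comp : IsCompletion Dom (view a H) b0 := by
      refine ⟨hb0dom, ?_⟩
      intro c v hv
      have hcH2 : c ∉ H := by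
        intro hmem
        simp [view, hmem] at hv
      have hne : c ≠ cstar := by intro hc; subst hc; exact hcH2 hcH
      have hav : a c = v := by simpa [view, hcH2] using hv
      simp [b0, Function.update_of_ne hne, hav]
    by_cases hc : ((Δ i).cueset cstar).Nonempty
    · obtain ⟨c', hc'H, hc'cue⟩ := hcover cstar hcH i hi hc
      have hPc' : ∃ P ∈ (Δ i).preds, c' ∈ P.cells ∧ c' ≠ cstar := by
        unfold DC.cueset at hc'cue
        split_ifs at hc'cue with hne
        · obtain ⟨P, ⟨hP, hPc⟩, hc'P⟩ := hc'cue
          exact ⟨P, hP, hc'P, fun h => hPc (h ▸ hc'P)⟩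
        · obtain ⟨⟨P, hP, hc'P⟩, hne'⟩ := hc'cue
          exact ⟨P, hP, hc'P, by simpa using hne'⟩
      obtain ⟨P, hP, hc'P, hne⟩ := hPc'
      obtain ⟨x', hx'dom, hx'f⟩ := hfals i hi P hP c' hc'P b0 hb0dom
      refine ⟨Function.update b0 c' x', ⟨?_, ?_⟩, ?_, ?_⟩
      · intro c; by_cases h : c = c'
        · subst h; simpa using hx'dom
        · rw [Function.update_of_ne h]; exact hb0dom c
      · intro c v hv
        have h1 := hb0comp.2 c v hv
        have hne2 : c ≠ c' := by
          intro h; subst h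
          unfold view at hv; simp [hc'H] at hv
        rw [Function.update_of_ne hne2]; exact h1
      · rw [Function.update_of_ne (Ne.symm hne)]
        simp [b0]
      · intro hall
        exact hx'f (hall P hP)
    · have hpm : ¬ ((Δ i).predsMinus cstar).Nonempty := by
        rintro ⟨P, hP, hPc⟩
        apply hc
        unfold DC.cueset
        rw [if_pos ⟨P, hP, hPc⟩]
        obtain ⟨c0, hc0⟩ := P.cells_nonempty
        exact ⟨c0, Set.mem_setOf.mpr ⟨P, ⟨hP, hPc⟩, hc0⟩⟩
      have hcells : ∀ P ∈ (Δ i).preds, ∀ c ∈ P.cells, c = cstar := by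
        intro P hP c hcP
        by_contra h
        apply hc
        unfold DC.cueset
        rw [if_neg hpm]
        exact ⟨c, ⟨P, hP, hcP⟩, by simpa using h⟩
      refine ⟨b0, hb0comp, by simp [b0], ?_⟩
      intro hall
      apply hd'
      intro P hP
      refine (P.local_eval b0 b' ?_).mp (hall P hP)
      intro c hcP
      have hc2 := hcells P hP c hcP
      subst hc2
      simp [b0, hb'c]
end

section
/- (Single-predicate constant dependencies leak even in the base view.) Let δ be an instantiated denial constraint consisting of a single predicate P with cells(P) = {c}. Then for every view ν of an instance a in which c is hidden, I(c ∣ ν, δ) = I(c ∣ ν₀, δ) = { x ∈ Dom(c) : P fails on every function mapping c to x }. In particular, if some x ∈ Dom(c) satisfies P, then I(c ∣ ν₀, δ) is a proper subset of Dom(c), so the querier eliminates domain values for c even from the base view and no hiding of other cells can prevent this. -/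
open scoped Classical

/-- a denial constraint consisting of a single predicate whose
cell set is `{c}` leaks even in the base view: for every view hiding `c`, the
inferred set equals the base-view inferred set, namely the values of `Dom c` on
which the predicate fails; and if some domain value satisfies the predicate,
the base-view inferred set is a proper subset of `Dom c`. -/
theorem stmt10 {C V : Type} [Fintype C] (Dom : C → Set V)
    (hDom : ∀ c, (Dom c).Nonempty)
    (a : C → V) (ha : IsInstance Dom a)
    (P : DCPred C V) (c : C) (hPc : P.cells = {c})
    (δ : DC C V) (hδ : δ.preds = [P])
    (H : Set C) (hcH : c ∈ H) :
    inferred Dom (view a H) δ c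
        = {x | x ∈ Dom c ∧ ∀ b : C → V, b c = x → ¬ P.eval b} ∧
    inferred Dom baseView δ c
        = {x | x ∈ Dom c ∧ ∀ b : C → V, b c = x → ¬ P.eval b} ∧
    ((∃ x ∈ Dom c, ∃ b : C → V, b c = x ∧ P.eval b) →
      inferred Dom (baseView (V := V)) δ c ⊂ Dom c) := by
  have hloc : ∀ b b' : C → V, b c = b' c → (P.eval b ↔ P.eval b') := by
    intro b b' h
    exact P.local_eval b b' (by intro c' hc'; rw [hPc] at hc'; simp at hc'; subst hc'; exact h)
  have hholds : ∀ b : C → V, δ.holds b ↔ ¬ P.eval b := by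
    intro b
    unfold DC.holds
    rw [hδ]
    simp
  have key : inferred Dom (view a H) δ c
      = {x | x ∈ Dom c ∧ ∀ b : C → V, b c = x → ¬ P.eval b} := by
    ext x
    constructor
    · rintro ⟨hxD, b, hb, hbc, hh⟩
      refine ⟨hxD, fun b' hb' hP => ?_⟩
      exact (hholds b).mp hh ((hloc b' b (by rw [hb', hbc])).mp hP)
    · rintro ⟨hxD, hfail⟩
      refine ⟨hxD, Function.update a c x, ⟨?_, ?_⟩, ?_, ?_⟩
      · intro c'
        by_cases h : c' = c
        · subst h; simpa using hxD
        · rw [Function.update_of_ne h]; exact ha c'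
      · intro c' v hv
        unfold view at hv
        by_cases h : c' ∈ H
        · simp [h] at hv
        · simp [h] at hv
          have hne : c' ≠ c := fun he => h (he ▸ hcH)
          rw [Function.update_of_ne hne, hv]
      · simp
      · exact (hholds _).mpr (hfail _ (by simp))
  have key0 : inferred Dom baseView δ c
      = {x | x ∈ Dom c ∧ ∀ b : C → V, b c = x → ¬ P.eval b} := by
    ext x
    constructor
    · rintro ⟨hxD, b, hb, hbc, hh⟩
      refine ⟨hxD, fun b' hb' hP => ?_⟩
      exact (hholds b).mp hh ((hloc b' b (by rw [hb', hbc])).mp hP)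
    · rintro ⟨hxD, hfail⟩
      refine ⟨hxD, Function.update a c x, ⟨?_, ?_⟩, ?_, ?_⟩
      · intro c'
        by_cases h : c' = c
        · subst h; simpa using hxD
        · rw [Function.update_of_ne h]; exact ha c'
      · intro c' v hv; simp [baseView] at hv
      · simp
      · exact (hholds _).mpr (hfail _ (by simp))
  refine ⟨key, key0, ?_⟩
  rintro ⟨x, hxD, b, hbc, hP⟩
  rw [key0]
  constructor
  · intro y hy; exact hy.1
  · intro hsub
    have := hsub hxD
    exact this.2 b hbc hP
end

section
/- (Total I/O cost bound of the full-deniability algorithm.) Let N, s, f, m, D be real numbers with N ≥ 0, s > 0, m > 0, D ≥ 0, f ≥ 0, and set r = f/m. Let T be a natural number. If r ≥ 2 and s · r^T ≤ N, then D · (N + s · Σ_{i=1}^{T} r^i) + s · f · Σ_{i=1}^{T} r^{i-1} ≤ N · D · (1 + r) + f · N. -/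
lemma aux1 (r : ℝ) (hr2 : 2 ≤ r) : ∀ T : ℕ, ∑ i ∈ Finset.Icc 1 T, r ^ i ≤ r ^ (T + 1)
  | 0 => by simp; linarith
  | (T + 1) => by
      rw [Finset.sum_Icc_succ_top (by omega : 1 ≤ T + 1)]
      have h := aux1 r hr2 T
      have hp : (0:ℝ) ≤ r ^ (T + 1) := by positivity
      calc ∑ i ∈ Finset.Icc 1 T, r ^ i + r ^ (T + 1) ≤ r ^ (T + 1) + r ^ (T + 1) := by linarith
        _ = 2 * r ^ (T + 1) := by ring
        _ ≤ r * r ^ (T + 1) := mul_le_mul_of_nonneg_right hr2 hp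
        _ = r ^ (T + 1 + 1) := by ring

lemma aux2 (r : ℝ) (hr2 : 2 ≤ r) : ∀ T : ℕ, ∑ i ∈ Finset.Icc 1 T, r ^ (i - 1) ≤ r ^ T
  | 0 => by simp
  | (T + 1) => by
      rw [Finset.sum_Icc_succ_top (by omega : 1 ≤ T + 1)]
      have h := aux2 r hr2 T
      have hp : (0:ℝ) ≤ r ^ T := by positivity
      simp only [Nat.add_sub_cancel]
      calc ∑ i ∈ Finset.Icc 1 T, r ^ (i - 1) + r ^ T ≤ r ^ T + r ^ T := by linarith
        _ = 2 * r ^ T := by ring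
        _ ≤ r * r ^ T := mul_le_mul_of_nonneg_right hr2 hp
        _ = r ^ (T + 1) := by ring

/-- total I/O cost bound of the full-deniability algorithm: with
`r = f/m ≥ 2` and `s·r^T ≤ N`,
`D·(N + s·Σ_{i=1}^{T} r^i) + s·f·Σ_{i=1}^{T} r^{i-1} ≤ N·D·(1+r) + f·N`. -/
theorem stmt12 (N s f m D : ℝ)
    (hN : 0 ≤ N) (hs : 0 < s) (hm : 0 < m) (hD : 0 ≤ D) (hf : 0 ≤ f)
    (r : ℝ) (hr : r = f / m) (T : ℕ)
    (hr2 : 2 ≤ r) (hT : s * r ^ T ≤ N) :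
    D * (N + s * ∑ i ∈ Finset.Icc 1 T, r ^ i) +
        s * f * ∑ i ∈ Finset.Icc 1 T, r ^ (i - 1) ≤
      N * D * (1 + r) + f * N := by
  have h1 := aux1 r hr2 T
  have h2 := aux2 r hr2 T
  have hA : s * ∑ i ∈ Finset.Icc 1 T, r ^ i ≤ N * r := by
    calc s * ∑ i ∈ Finset.Icc 1 T, r ^ i ≤ s * r ^ (T + 1) := by
          exact mul_le_mul_of_nonneg_left h1 hs.le
      _ = s * r ^ T * r := by ring
      _ ≤ N * r := by nlinarith
  have hB : s * ∑ i ∈ Finset.Icc 1 T, r ^ (i - 1) ≤ N := by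
    calc s * ∑ i ∈ Finset.Icc 1 T, r ^ (i - 1) ≤ s * r ^ T :=
          mul_le_mul_of_nonneg_left h2 hs.le
      _ ≤ N := hT
  nlinarith [mul_le_mul_of_nonneg_left hA hD, mul_le_mul_of_nonneg_left hB hf]
end

section
/- (Key step of Theorem 8.1: compatible instances with all hidden cells sensitive already achieve full deniability.) Assume the falsifiability assumption. Let S_Δ be a finite set of instantiated denial constraints, let a be a database instance satisfying every δ ∈ S_Δ, and let H ⊆ C be a hidden set satisfying the covering condition: for every c ∈ H and every δ ∈ S_Δ, if cueset(c, δ) is nonempty then it contains a cell of H. Let a' be any database instance (a'(c) ∈ Dom(c) for all c) that satisfies every δ ∈ S_Δ and agrees with a on every cell outside H (i.e., a' is compatible with the view of a hiding H). Then the view ν' of a' hiding H achieves full deniability with the entire hidden set H as sensitive cells: I(c ∣ ν', S_Δ) = I(c ∣ ν₀, S_Δ) for every c ∈ H. -/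
open scoped Classical

/-- key step of Theorem 8.1: under falsifiability, if `H`
satisfies the covering condition for an instance `a` satisfying every
constraint of `S_Δ`, then any instance `a'` satisfying every constraint of
`S_Δ` and agreeing with `a` outside `H` (i.e., compatible with the view of `a`
hiding `H`) yields a view hiding `H` that achieves full deniability with the
entire hidden set `H` as sensitive cells. -/
theorem stmt14 {C V ι : Type} [Fintype C] (Dom : C → Set V)
    (hDom : ∀ c, (Dom c).Nonempty)
    (S : Finset ι) (Δ : ι → DC C V)
    (hfals : ∀ i ∈ S, ∀ P ∈ (Δ i).preds, Falsifiable Dom P)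
    (a : C → V) (ha : IsInstance Dom a)
    (hsat : ∀ i ∈ S, (Δ i).holds a)
    (H : Set C)
    (hcover : ∀ c ∈ H, ∀ i ∈ S, ((Δ i).cueset c).Nonempty →
      ∃ c' ∈ H, c' ∈ (Δ i).cueset c)
    (a' : C → V) (ha' : IsInstance Dom a')
    (hsat' : ∀ i ∈ S, (Δ i).holds a')
    (hagree : ∀ c, c ∉ H → a' c = a c) :
    ∀ c ∈ H,
      inferredSet Dom (view a' H) S Δ c = inferredSet Dom baseView S Δ c := by

  intro c hc
  ext x
  simp only [inferredSet, Set.mem_iInter]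
  constructor
  · intro hx i hi
    obtain ⟨hxD, b, ⟨hbD, hbν⟩, hbc, hhold⟩ := hx i hi
    exact ⟨hxD, b, ⟨hbD, fun c v h => by simp [baseView] at h⟩, hbc, hhold⟩
  · intro hx i hi
    obtain ⟨hxD, bbase, ⟨hbD, _⟩, hbc, hhold⟩ := hx i hi
    set δ := Δ i with hδ
    by_cases hne : (δ.cueset c).Nonempty
    · obtain ⟨c', hc'H, hc'cue⟩ := hcover c hc i hi hne
      have hPex : ∃ P ∈ δ.preds, c' ∈ P.cells ∧ c' ≠ c := by
        unfold DC.cueset at hc'cue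
        split_ifs at hc'cue with h
        · obtain ⟨P, ⟨hP, hcP⟩, hc'P⟩ := hc'cue
          exact ⟨P, hP, hc'P, fun e => hcP (e ▸ hc'P)⟩
        · obtain ⟨⟨P, hP, hc'P⟩, hne'⟩ := hc'cue
          exact ⟨P, hP, hc'P, hne'⟩
      obtain ⟨P, hP, hc'P, hc'c⟩ := hPex
      set b₀ := Function.update a' c x with hb₀
      have hb₀D : ∀ c'', b₀ c'' ∈ Dom c'' := by
        intro c''
        by_cases h : c'' = c
        · subst h; simpa [hb₀] using hxD
        · simpa [hb₀, Function.update_of_ne h] using ha' c''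
      obtain ⟨x', hx'D, hPfail⟩ := hfals i hi P hP c' hc'P b₀ hb₀D
      refine ⟨hxD, Function.update b₀ c' x', ⟨?_, ?_⟩, ?_, ?_⟩
      · intro c''
        by_cases h : c'' = c'
        · subst h; simpa using hx'D
        · rw [Function.update_of_ne h]; exact hb₀D c''
      · intro c'' v hv
        simp only [view] at hv
        split_ifs at hv with h
        have h1 : c'' ≠ c' := fun e => h (e ▸ hc'H)
        have h2 : c'' ≠ c := fun e => h (e ▸ hc)
        rw [Function.update_of_ne h1, hb₀, Function.update_of_ne h2]
        exact Option.some.inj hv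
      · rw [Function.update_of_ne hc'c.symm, hb₀, Function.update_self]
      · intro hall
        exact hPfail (hall P hP)
    · have hpm : ¬ (δ.predsMinus c).Nonempty := by
        intro ⟨P, hPm⟩
        obtain ⟨y, hy⟩ := P.cells_nonempty
        exact hne ⟨y, by unfold DC.cueset; rw [if_pos ⟨P, hPm⟩]; exact ⟨P, hPm, hy⟩⟩
      have hcue : δ.cueset c = δ.cellsOf \ {c} := by
        unfold DC.cueset; rw [if_neg hpm]
      have hcells : ∀ P ∈ δ.preds, ∀ y ∈ P.cells, y = c := by
        intro P hPp y hy
        by_contra hyc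
        exact hne ⟨y, by rw [hcue]; exact ⟨⟨P, hPp, hy⟩, hyc⟩⟩
      rw [DC.holds] at hhold
      push_neg at hhold
      obtain ⟨P, hPp, hPfail⟩ := hhold
      have hfail2 : ¬ P.eval (Function.update a' c x) := by
        intro he
        exact hPfail ((P.local_eval _ _ (fun y hy => by
          rw [hcells P hPp y hy, Function.update_self, hbc])).mpr he)
      refine ⟨hxD, Function.update a' c x, ⟨?_, ?_⟩, ?_, ?_⟩
      · intro c''
        by_cases h : c'' = c
        · subst h; simpa using hxD
        · simpa [Function.update_of_ne h] using ha' c''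
      · intro c'' v hv
        simp only [view] at hv
        split_ifs at hv with h
        have h2 : c'' ≠ c := fun e => h (e ▸ hc)
        rw [Function.update_of_ne h2]
        exact Option.some.inj hv
      · exact Function.update_self c x a'
      · intro hall
        exact hfail2 (hall P hPp)
end
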